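/- For nonzero integers x_0,...,x_n and weights q_0,...,q_n, if wgcd(x_0,...,x_n) = d, then the tuple (x_0/d^{q_0}, ..., x_n/d^{q_n}) consists of integers and has weighted gcd equal to 1 (i.e., every tuple admits a normalization). -/

import Mathlib

/-- The weighted greatest common divisor of a tuple of nonzero integers. -/
noncomputable def wgcd {n : ℕ} (q : Fin (n+1) → ℕ) (x : Fin (n+1) → ℤ) : ℕ :=
  ∏ᶠ p : Nat.Primes, (p : ℕ) ^ (⨅ i, padicValInt p (x i) / q i)

lemma padicValInt_eq_fact (p : ℕ) (hp : p.Prime) (z : ℤ) :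
    padicValInt p z = z.natAbs.factorization p := by
  rw [padicValInt, Nat.factorization_def _ hp]

lemma wgcd_exp_eq {n : ℕ} (q : Fin (n+1) → ℕ) (x : Fin (n+1) → ℤ) (p : ℕ) (hp : p.Prime) :
    (⨅ i, padicValInt p (x i) / q i) = ⨅ i, (x i).natAbs.factorization p / q i := by
  congr 1; ext i; rw [padicValInt_eq_fact _ hp]

lemma wgcd_support_finite {n : ℕ} (q : Fin (n+1) → ℕ) (hq : ∀ i, 0 < q i)
    (x : Fin (n+1) → ℤ) (hx : ∀ i, x i ≠ 0) :
    (Function.mulSupport fun p : Nat.Primes =>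
      (p : ℕ) ^ (⨅ i, padicValInt p (x i) / q i)).Finite := by
  have h0 : (x 0).natAbs ≠ 0 := by simpa using hx 0
  apply Set.Finite.subset (Set.Finite.preimage Subtype.coe_injective.injOn
    (x 0).natAbs.divisors.finite_toSet)
  intro p hp
  have hne : (⨅ i, padicValInt (p:ℕ) (x i) / q i) ≠ 0 := by
    intro h
    exact hp (by simp [Function.mulSupport, h])
  have hle : (⨅ i, padicValInt (p:ℕ) (x i) / q i) ≤ padicValInt (p:ℕ) (x 0) / q 0 :=
    ciInf_le (OrderBot.bddBelow _) 0
  have h1 : padicValInt (p:ℕ) (x 0) / q 0 ≠ 0 := fun h => hne (Nat.le_zero.mp (h ▸ hle))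
  have h2 : 1 ≤ (x 0).natAbs.factorization (p:ℕ) := by
    have h3 := (Nat.div_ne_zero_iff.mp h1).2
    rw [padicValInt_eq_fact _ p.2] at h3
    have := hq 0
    omega
  have : (p:ℕ) ∣ (x 0).natAbs := (Nat.Prime.dvd_iff_one_le_factorization p.2 h0).mpr h2
  simp [Nat.mem_divisors, this, h0]

lemma wgcd_fact {n : ℕ} (q : Fin (n+1) → ℕ) (hq : ∀ i, 0 < q i)
    (x : Fin (n+1) → ℤ) (hx : ∀ i, x i ≠ 0) :
    wgcd q x ≠ 0 ∧ ∀ p : ℕ, p.Prime →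
      (wgcd q x).factorization p = ⨅ i, (x i).natAbs.factorization p / q i := by
  have hfin := wgcd_support_finite q hq x hx
  have hprod : wgcd q x = ∏ p ∈ hfin.toFinset, (p : ℕ) ^ (⨅ i, padicValInt p (x i) / q i) :=
    finprod_eq_prod _ hfin
  have hne0 : ∀ p ∈ hfin.toFinset, (p : ℕ) ^ (⨅ i, padicValInt (p:ℕ) (x i) / q i) ≠ 0 :=
    fun p _ => pow_ne_zero _ p.2.pos.ne'
  constructor
  · rw [hprod]
    exact Finset.prod_ne_zero_iff.mpr hne0
  · intro p hp
    set P : Nat.Primes := ⟨p, hp⟩ with hP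
    rw [hprod, Nat.factorization_prod hne0, Finsupp.finset_sum_apply]
    have key : ∀ pp : Nat.Primes,
        ((pp:ℕ) ^ (⨅ i, padicValInt (pp:ℕ) (x i) / q i)).factorization p
          = if pp = P then ⨅ i, (x i).natAbs.factorization p / q i else 0 := by
      intro pp
      rw [Nat.Prime.factorization_pow pp.2, Finsupp.single_apply]
      by_cases hc : pp = P
      · subst hc
        rw [if_pos rfl, if_pos rfl]
        exact wgcd_exp_eq q x p hp
      · rw [if_neg (fun h => hc (Subtype.ext h)), if_neg hc]
    simp only [key]
    rw [Finset.sum_ite_eq' hfin.toFinset P (fun _ => ⨅ i, (x i).natAbs.factorization p / q i)]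
    split
    · rfl
    · next hmem =>
      rw [Set.Finite.mem_toFinset] at hmem
      have h1 : (P:ℕ) ^ (⨅ i, padicValInt (P:ℕ) (x i) / q i) = 1 :=
        Function.notMem_mulSupport.mp hmem
      have h2 : (⨅ i, padicValInt (P:ℕ) (x i) / q i) = 0 := by
        by_contra hk
        exact (Nat.one_lt_pow hk hp.one_lt).ne' h1
      rw [← wgcd_exp_eq q x p hp, h2]

/-- if `d = wgcd x`, then each `d^{q i}` divides `x i`, and the
normalized tuple `(x i / d^{q i})` has weighted gcd 1. -/
theorem wgcd_normalization {n : ℕ} (q : Fin (n+1) → ℕ) (hq : ∀ i, 0 < q i)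
    (x : Fin (n+1) → ℤ) (hx : ∀ i, x i ≠ 0)
    (d : ℕ) (hd : d = wgcd q x) :
    (∀ i, (d : ℤ) ^ (q i) ∣ x i) ∧
      wgcd q (fun i => x i / (d : ℤ) ^ (q i)) = 1 := by
  obtain ⟨hd0, hfact⟩ := wgcd_fact q hq x hx
  rw [← hd] at hd0 hfact
  have ha : ∀ i, (x i).natAbs ≠ 0 := fun i => by simpa using hx i
  -- divisibility in ℕ
  have hdvd : ∀ i, d ^ (q i) ∣ (x i).natAbs := by
    intro i
    refine (Nat.factorization_le_iff_dvd (pow_ne_zero _ hd0) (ha i)).mp ?_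
    rw [Nat.factorization_pow]
    intro p
    rw [Finsupp.smul_apply, smul_eq_mul]
    by_cases hp : p.Prime
    · rw [hfact p hp]
      calc q i * ⨅ j, (x j).natAbs.factorization p / q j
          ≤ q i * ((x i).natAbs.factorization p / q i) :=
            Nat.mul_le_mul_left _ (ciInf_le (OrderBot.bddBelow _) i)
        _ ≤ (x i).natAbs.factorization p := by
            rw [mul_comm]; exact Nat.div_mul_le_self _ _
    · simp [Nat.factorization_eq_zero_of_not_prime _ hp]
  have hdvdZ : ∀ i, (d : ℤ) ^ (q i) ∣ x i := by
    intro i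
    rw [show ((d:ℤ)) ^ (q i) = ((d ^ (q i) : ℕ) : ℤ) by push_cast; ring]
    exact Int.natCast_dvd.mpr (hdvd i)
  refine ⟨hdvdZ, ?_⟩
  set y : Fin (n+1) → ℤ := fun i => x i / (d : ℤ) ^ (q i) with hy
  have hyabs : ∀ i, (y i).natAbs = (x i).natAbs / d ^ (q i) := by
    intro i
    show (x i / (d:ℤ) ^ (q i)).natAbs = (x i).natAbs / d ^ (q i)
    rw [show ((d:ℤ)) ^ (q i) = ((d ^ (q i) : ℕ) : ℤ) by push_cast; ring]
    rw [Int.natAbs_ediv_of_dvd (Int.natCast_dvd.mpr (hdvd i))]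
    simp [Int.natAbs_pow]
  -- each exponent of wgcd of y is zero
  rw [wgcd]
  apply finprod_eq_one_of_forall_eq_one
  intro p
  rw [wgcd_exp_eq q y (p:ℕ) p.2]
  set m := ⨅ j, (x j).natAbs.factorization (p:ℕ) / q j with hm
  have hyfact : ∀ i, (y i).natAbs.factorization (p:ℕ)
      = (x i).natAbs.factorization (p:ℕ) - q i * m := by
    intro i
    rw [hyabs i, Nat.factorization_div (hdvd i), Finsupp.tsub_apply,
      Nat.factorization_pow, Finsupp.smul_apply, smul_eq_mul, hfact _ p.2, hm]
  obtain ⟨j, hj⟩ := Finite.exists_min (fun i => (x i).natAbs.factorization (p:ℕ) / q i)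
  have hmj : m = (x j).natAbs.factorization (p:ℕ) / q j :=
    le_antisymm (ciInf_le (OrderBot.bddBelow _) j) (le_ciInf hj)
  have hterm : (y j).natAbs.factorization (p:ℕ) / q j = 0 := by
    rw [hyfact j, hmj, Nat.sub_mul_div _ _ _, Nat.sub_self]
  have hle : (⨅ i, (y i).natAbs.factorization (p:ℕ) / q i) ≤ 0 :=
    hterm ▸ ciInf_le (OrderBot.bddBelow _) j
  rw [Nat.le_zero.mp hle, pow_zero]
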